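/- arXiv:2201.13427 — 4 statements merged into one kernel-verified Lean document; each statement's English description precedes it below -/
import Mathlib

section
/- Let P[1..m] be a segmentation pattern, μ ∈ L a threshold, x[1..q] an array of strings over Σ with q + 1 ≤ m, and y ∈ Σ*. Let x′[1..q+1] be the array obtained from x by appending y (x′[i] = x[i] for 1 ≤ i ≤ q and x′[q+1] = y). Then for every integer k with 1 ≤ k ≤ q, k is an x′-border length of P if and only if k − 1 is an x-border length of P and μ_{P[k]}(y) ≥ μ. (Soundness of the extend operation on prefix structures.) -/
/-!
Soundness of the `extend` operation on prefix structures.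

`L` is a linearly ordered set with least element `⊥` and greatest element `⊤`.
Strings over the alphabet `A` are lists; the segmentation pattern `P[1..m]` is
`P : ℕ → List A → L` (1-indexed), the array `x[1..q]` of strings is `x : ℕ → List A`
(1-indexed), and `x'[1..q+1]` is obtained from `x` by appending the string `y`.

For an array `z[1..r]` of strings, `k` (with `0 ≤ k < r`) is a `z`-border length of `P`
iff `μ ≤ P i (z (r - k + i))` for all `1 ≤ i ≤ k`.

Claim: for every `1 ≤ k ≤ q`, `k` is an `x'`-border length of `P` (with `r = q + 1`)
iff `k - 1` is an `x`-border length of `P` (with `r = q`) and `μ ≤ P k y`.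
-/
theorem extend_sound
    {L : Type*} [LinearOrder L] [OrderBot L] [OrderTop L] {A : Type*}
    (m q : ℕ) (hqm : q + 1 ≤ m)
    (P : ℕ → List A → L) (μ : L) (x : ℕ → List A) (y : List A)
    (x' : ℕ → List A) (hx' : ∀ i, x' i = if i = q + 1 then y else x i) :
    ∀ k, 1 ≤ k → k ≤ q →
      ((∀ i, 1 ≤ i → i ≤ k → μ ≤ P i (x' (q + 1 - k + i))) ↔
        ((∀ i, 1 ≤ i → i ≤ k - 1 → μ ≤ P i (x (q - (k - 1) + i))) ∧ μ ≤ P k y)) := by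
  intro k hk1 hkq
  constructor
  · intro h
    refine ⟨fun i hi1 hik => ?_, ?_⟩
    · have := h i hi1 (le_trans hik (Nat.sub_le k 1))
      rw [hx'] at this
      have hne : q + 1 - k + i ≠ q + 1 := by omega
      rw [if_neg hne] at this
      have : μ ≤ P i (x (q + 1 - k + i)) := this
      have heq : q + 1 - k + i = q - (k - 1) + i := by omega
      rwa [heq] at this
    · have := h k hk1 le_rfl
      rw [hx'] at this
      have heq : q + 1 - k + k = q + 1 := by omega
      rwa [if_pos heq] at this
  · rintro ⟨h, hy⟩ i hi1 hik
    rw [hx']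
    rcases eq_or_lt_of_le hik with rfl | hlt
    · have heq : q + 1 - i + i = q + 1 := by omega
      rwa [if_pos heq]
    · have hne : q + 1 - k + i ≠ q + 1 := by omega
      rw [if_neg hne]
      have heq : q + 1 - k + i = q - (k - 1) + i := by omega
      rw [heq]
      exact h i hi1 (by omega)
end

section
/- Fix integers m ≥ 1 and λ₂ ≥ λ₁ ≥ 1, let L = {0 < 1}, μ = 1, and Σ = {0, 1, …, m}. For 1 ≤ i ≤ m define the segmentation symbol α_i by μ_{α_i}(x) = 1 if |x| = λ₂ and exactly one position of x contains the value i, and μ_{α_i}(x) = 0 otherwise. Let P = α₁α₂⋯α_m and let T be the string (0^{λ₂−1} 1)(0^{λ₂−1} 2)⋯(0^{λ₂−1} m) 0^{λ₂−1} of length (m+1)λ₂ − 1, where 0^{λ₂−1} denotes λ₂−1 copies of the character 0. Then T has exactly λ₂ valid (P, λ, μ)-segmentations with λ = (λ₁, λ₂), namely, for each p = 1, …, λ₂, the segmentation whose i-th segment is s_i = [p + (i−1)λ₂, p + iλ₂ − 1] for 1 ≤ i ≤ m. (Combinatorial content of Proposition 2.1.) -/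
/-!
Combinatorial content of Proposition 2.1 (the extreme case for the SC-Heuristic).

Here `L = {0 < 1}` is modeled by `Bool` (`false < true`) with threshold `μ = true`,
and the alphabet `Σ = {0, 1, …, m}` is modeled inside `ℕ`.

The segmentation symbol `α_i` (for `1 ≤ i ≤ m`) gives a string `x` the degree `1`
iff `|x| = λ₂` and exactly one position of `x` contains the value `i`.

The text `T` of length `n = (m+1)·λ₂ - 1` is
`(0^{λ₂-1} 1)(0^{λ₂-1} 2) ⋯ (0^{λ₂-1} m) 0^{λ₂-1}`,
i.e. the 1-indexed character `T j` equals `j / λ₂` if `λ₂ ∣ j` and `0` otherwise.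

A valid `(P, λ, μ)`-segmentation of `T`, for `P = α₁ ⋯ α_m` and `λ = (λ₁, λ₂)`, is a
sequence of `m` adjacent segments `[low k, high k]` of `T` (`1 ≤ k ≤ m`), each of
length between `λ₁` and `λ₂`, whose corresponding substrings of `T` match the `α_k`
with degree at least `μ`.

Claim: the valid segmentations are exactly the `λ₂` segmentations indexed by
`p = 1, …, λ₂`, whose `i`-th segment is `[p + (i-1)·λ₂, p + i·λ₂ - 1]`.
-/


lemma count_map_range (f : ℕ → ℕ) (len c i : ℕ) (hf : ∀ t, f t = i ↔ t = c) :
    ((List.range len).map f).count i = if c < len then 1 else 0 := by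
  induction len with
  | zero => simp
  | succ n ih =>
    rw [List.range_succ, List.map_append, List.count_append, ih]
    by_cases h : f n = i
    · have hc : n = c := (hf n).1 h
      subst hc
      simp [List.count_cons, h]
    · have hc : n ≠ c := fun e => h ((hf n).2 e)
      simp [List.count_cons, h]
      split_ifs <;> omega


/-- The substring `T[low..high]` of the text `T : ℕ → A` (1-indexed), as a list. -/
def segStr {A : Type*} (T : ℕ → A) (low high : ℕ) : List A :=
  (List.range (high + 1 - low)).map fun t => T (low + t)

theorem extreme_case_segmentations
    (m lam1 lam2 : ℕ) (hm : 1 ≤ m) (h1 : 1 ≤ lam1) (h12 : lam1 ≤ lam2)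
    (T : ℕ → ℕ) (hT : ∀ j, T j = if j % lam2 = 0 then j / lam2 else 0)
    (n : ℕ) (hn : n = (m + 1) * lam2 - 1)
    (alpha : ℕ → List ℕ → Bool)
    (halpha : ∀ i x, alpha i x = decide (x.length = lam2 ∧ x.count i = 1))
    (μ : Bool) (hμ : μ = true) :
    ∀ low high : ℕ → ℕ,
      ((∀ k, 1 ≤ k → k + 1 ≤ m → high k + 1 = low (k + 1)) ∧
        1 ≤ low 1 ∧ high m ≤ n ∧
        (∀ k, 1 ≤ k → k ≤ m →
          low k ≤ high k ∧
          lam1 ≤ high k + 1 - low k ∧ high k + 1 - low k ≤ lam2 ∧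
          μ ≤ alpha k (segStr T (low k) (high k))))
      ↔ (∃ p, 1 ≤ p ∧ p ≤ lam2 ∧ ∀ i, 1 ≤ i → i ≤ m →
            low i = p + (i - 1) * lam2 ∧ high i + 1 = p + i * lam2) := by
  subst hμ hn
  have hlam2 : 1 ≤ lam2 := h1.trans h12
  have hTiff : ∀ i j, 1 ≤ i → (T j = i ↔ j = i * lam2) := by
    intro i j hi
    rw [hT]
    by_cases hj : j % lam2 = 0
    · rw [if_pos hj]
      constructor
      · intro h
        have h2 := Nat.div_add_mod j lam2
        rw [h, hj] at h2
        rw [← h2]; ring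
      · intro h
        subst h
        rw [Nat.mul_div_assoc i (dvd_refl lam2), Nat.div_self hlam2, mul_one]
    · rw [if_neg hj]
      constructor
      · intro h; exact absurd h.symm (by omega)
      · intro h
        exact absurd (show j % lam2 = 0 by rw [h]; exact Nat.mul_mod_left i lam2) hj
  have emul : ∀ i : ℕ, 1 ≤ i → i * lam2 = (i - 1) * lam2 + lam2 := by
    intro i hi
    have h' : i - 1 + 1 = i := by omega
    calc i * lam2 = (i - 1 + 1) * lam2 := by rw [h']
      _ = (i - 1) * lam2 + lam2 := by ring
  intro low high
  constructor
  · rintro ⟨hadj, hlow1, hhm, hk⟩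
    have key : ∀ k, 1 ≤ k → k ≤ m →
        high k + 1 = low k + lam2 ∧ low k ≤ k * lam2 ∧ k * lam2 < low k + lam2 := by
      intro k hk1 hkm
      obtain ⟨hle, _, hub, hα⟩ := hk k hk1 hkm
      rw [halpha] at hα
      have hb : decide ((segStr T (low k) (high k)).length = lam2 ∧
          (segStr T (low k) (high k)).count k = 1) = true :=
        le_antisymm (Bool.le_true _) hα
      obtain ⟨hlen, hcnt⟩ := of_decide_eq_true hb
      have hlen' : high k + 1 - low k = lam2 := by
        simpa [segStr] using hlen
      have hlen2 : high k + 1 = low k + lam2 := by omega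
      have hmem : k ∈ segStr T (low k) (high k) := by
        have : 0 < (segStr T (low k) (high k)).count k := by omega
        exact List.count_pos_iff.mp this
      rw [segStr] at hmem
      obtain ⟨t, ht, hft⟩ := List.mem_map.mp hmem
      rw [List.mem_range] at ht
      have heq := (hTiff k (low k + t) hk1).1 hft
      exact ⟨hlen2, by omega, by omega⟩
    have hp2 : low 1 ≤ lam2 := by
      have := (key 1 le_rfl hm).2.1
      rwa [one_mul] at this
    refine ⟨low 1, hlow1, hp2, ?_⟩
    intro i
    induction i with
    | zero => intro h; exact absurd h (by omega)
    | succ j ih =>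
      intro _ hjm
      rw [Nat.add_sub_cancel]
      by_cases hj : 1 ≤ j
      · obtain ⟨hprev1, hprev2⟩ := ih hj (by omega)
        have hadj' := hadj j hj hjm
        have hlen := (key (j + 1) (by omega) hjm).1
        have e2 : (j + 1) * lam2 = j * lam2 + lam2 := by ring
        omega
      · have hj0 : j = 0 := by omega
        subst hj0
        have hlen1 := (key 1 le_rfl hm).1
        norm_num
        omega
  · rintro ⟨p, hp1, hp2, hspec⟩
    refine ⟨?_, ?_, ?_, ?_⟩
    · intro k hk1 hk1m
      have h1' := (hspec k hk1 (by omega)).2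
      have h2' := (hspec (k + 1) (by omega) hk1m).1
      rw [h2', Nat.add_sub_cancel, h1']
    · have := (hspec 1 le_rfl hm).1
      rw [this]
      omega
    · have hh := (hspec m hm le_rfl).2
      have e2 : (m + 1) * lam2 = m * lam2 + lam2 := by ring
      omega
    · intro k hk1 hkm
      obtain ⟨hl, hh⟩ := hspec k hk1 hkm
      have ek := emul k hk1
      have hlk : low k ≤ k * lam2 := by omega
      have hki : k * lam2 < high k + 1 := by omega
      have hhl : high k + 1 = low k + lam2 := by omega
      have hlen : high k + 1 - low k = lam2 := by omega
      refine ⟨by omega, by omega, by omega, ?_⟩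
      rw [halpha]
      have hP1 : (segStr T (low k) (high k)).length = lam2 := by
        simp [segStr, hlen]
      have hP2 : (segStr T (low k) (high k)).count k = 1 := by
        rw [segStr, hlen]
        rw [count_map_range _ _ (k * lam2 - low k) _ (fun t => by
          rw [hTiff k (low k + t) hk1]; omega)]
        rw [if_pos (by omega)]
      rw [decide_eq_true ⟨hP1, hP2⟩]
end

section
/- Let T = T[1..n] be a text, P = P[1..m] a segmentation pattern, and λ ≥ 1 an integer with mλ ≤ n. Then: (1) if m = 1, then σ_{P,λ}(T) = μ_{P[1]}(T[1..n]); and (2) if m ≥ 2, then σ_{P,λ}(T) = max{ σ_{P[1..m−1],λ}(T[1..k−1]) ⊗ μ_{P[m]}(T[k..n]) : (m−1)λ + 1 ≤ k ≤ n − λ + 1 }. (Theorem 4.1: optimal substructure of the global segmentation problem.) -/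
/-!
Theorem 4.1: optimal substructure of the global segmentation problem.

`L` is a linearly ordered commutative monoid-like structure: `(L, ≤)` is a linear
order with least element `⊥` (the "0") and greatest element `⊤` (the "1"); the
accumulation operation `⊗` is the monoid multiplication `*`, with identity `1`,
and we assume `⊤ = 1`, that `⊥` is a zero element (`a * ⊥ = ⊥`), and that `*` is
monotone.

Strings over the alphabet `A` are lists; the pattern `P[1..m]` is `P : ℕ → List A → L`
(1-indexed) and the text `T[1..n]` is `T : ℕ → A` with length `n`.

`seg T a b` is the substring `T[a+1..b]`.  An `(m, λ)`-decomposition of `T[1..n]` is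
given by cut points `j 0 = 0 ≤ j 1 ≤ … ≤ j m = n` with `j (k+1) - j k ≥ λ`; its value
is `∏_{i=1}^m μ_{P[i]}(T[j_{i-1}+1 .. j_i])`.  `decompVals P T m n λ` is the set of all
such values, and `σ i j = σ_{P[1..i],λ}(T[1..j])` is its greatest element
(for the pattern prefix `P[1..i]` and text prefix `T[1..j]`).

Claim: (1) if `m = 1` then `σ_{P,λ}(T) = μ_{P[1]}(T[1..n])`; (2) if `m ≥ 2` then
`σ_{P,λ}(T) = max { σ_{P[1..m-1],λ}(T[1..k-1]) ⊗ μ_{P[m]}(T[k..n]) :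
(m-1)λ + 1 ≤ k ≤ n - λ + 1 }`.
-/

/-- The substring `T[a+1..b]` of the 1-indexed text `T`, as a list. -/
def seg {A : Type*} (T : ℕ → A) (a b : ℕ) : List A :=
  (List.range (b - a)).map fun t => T (a + 1 + t)

/-- The set of values `μ_P(t₁, …, t_m)` of all `(m, λ)`-decompositions of `T[1..n]`. -/
def decompVals {L : Type*} [CommMonoid L] {A : Type*}
    (P : ℕ → List A → L) (T : ℕ → A) (m n lam : ℕ) : Set L :=
  { v | ∃ j : ℕ → ℕ, j 0 = 0 ∧ j m = n ∧ (∀ k, k < m → j k + lam ≤ j (k + 1)) ∧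
        v = ∏ i ∈ Finset.Icc 1 m, P i (seg T (j (i - 1)) (j i)) }

lemma cuts_lb {j : ℕ → ℕ} {lam m : ℕ} (h0 : j 0 = 0)
    (hs : ∀ k, k < m → j k + lam ≤ j (k + 1)) :
    ∀ i, i ≤ m → i * lam ≤ j i := by
  intro i
  induction i with
  | zero => simp [h0]
  | succ i ih =>
    intro h
    have h1 := ih (by omega)
    have h2 := hs i (by omega)
    calc (i + 1) * lam = i * lam + lam := by ring
    _ ≤ j i + lam := by omega
    _ ≤ j (i + 1) := h2

theorem global_segmentation_optimal_substructure
    {L : Type*} [LinearOrder L] [CommMonoid L] [OrderBot L] [OrderTop L]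
    (hzero : ∀ a : L, a * ⊥ = ⊥) (htop : (⊤ : L) = 1)
    (hmono : ∀ a b c : L, a ≤ b → a * c ≤ b * c)
    {A : Type*} (T : ℕ → A) (P : ℕ → List A → L)
    (n m lam : ℕ) (hm : 1 ≤ m) (hlam : 1 ≤ lam) (hmn : m * lam ≤ n)
    (σ : ℕ → ℕ → L)
    (hσ : ∀ i j, 1 ≤ i → i * lam ≤ j → IsGreatest (decompVals P T i j lam) (σ i j)) :
    (m = 1 → σ 1 n = P 1 (seg T 0 n)) ∧
    (2 ≤ m → IsGreatest
      { v | ∃ k, (m - 1) * lam + 1 ≤ k ∧ k + lam ≤ n + 1 ∧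
            v = σ (m - 1) (k - 1) * P m (seg T (k - 1) n) }
      (σ m n)) := by
  constructor
  · intro hm1
    subst hm1
    obtain ⟨⟨j, h0, h1, _, hv⟩, _⟩ := hσ 1 n le_rfl (by simpa using hmn)
    rw [hv]
    simp [h0, h1]
  · intro hm2
    set m' := m - 1 with hm'
    have hm'1 : 1 ≤ m' := by omega
    -- extension: any decomposition value of the prefix, times the last factor,
    -- is a decomposition value of the whole text
    have hext : ∀ k, m' * lam + 1 ≤ k → k + lam ≤ n + 1 →
        ∀ w ∈ decompVals P T m' (k - 1) lam,
        w * P m (seg T (k - 1) n) ∈ decompVals P T m n lam := by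
      intro k hk1 hk2 w hw
      obtain ⟨j', h0', hj'm, hstep', hv'⟩ := hw
      refine ⟨fun i => if i = m then n else j' i, ?_, ?_, ?_, ?_⟩
      · simp only [if_neg (show (0:ℕ) ≠ m by omega)]; exact h0'
      · simp
      · intro kk hkk
        by_cases h : kk + 1 = m
        · simp only [if_pos h, if_neg (show kk ≠ m by omega)]
          have hkkm : kk = m' := by omega
          rw [hkkm, hj'm]; omega
        · simp only [if_neg h, if_neg (show kk ≠ m by omega)]
          exact hstep' kk (by omega)
      · rw [hv', show m = m' + 1 from by omega,
          Finset.prod_Icc_succ_top (by omega : 1 ≤ m' + 1)]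
        congr 1
        · apply Finset.prod_congr rfl
          intro i hi
          simp only [Finset.mem_Icc] at hi
          beta_reduce
          rw [if_neg (by omega), if_neg (by omega)]
        · beta_reduce
          simp only [Nat.add_sub_cancel]
          rw [if_neg (show m' ≠ m' + 1 by omega)]
          simp [hj'm]
    have hub : ∀ v ∈ { v | ∃ k, m' * lam + 1 ≤ k ∧ k + lam ≤ n + 1 ∧
            v = σ m' (k - 1) * P m (seg T (k - 1) n) }, v ≤ σ m n := by
      rintro v ⟨k, hk1, hk2, rfl⟩
      exact (hσ m n hm hmn).2
        (hext k hk1 hk2 _ (hσ m' (k - 1) hm'1 (by omega)).1)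
    constructor
    · -- membership: take k = j m' + 1 for an optimal decomposition j
      obtain ⟨⟨j, h0, hjm, hstep, hv⟩, _⟩ := hσ m n hm hmn
      have hlb := cuts_lb h0 hstep m' (by omega)
      have hstep' := hstep m' (by omega)
      rw [show m' + 1 = m from by omega, hjm] at hstep'
      set k := j m' + 1 with hk
      have hk1 : m' * lam + 1 ≤ k := by omega
      have hk2 : k + lam ≤ n + 1 := by omega
      refine ⟨k, hk1, hk2, ?_⟩
      have hjm' : j m' = k - 1 := by omega
      have hpre : (∏ i ∈ Finset.Icc 1 m', P i (seg T (j (i - 1)) (j i)))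
          ∈ decompVals P T m' (k - 1) lam :=
        ⟨j, h0, hjm', fun kk hkk => hstep kk (by omega), rfl⟩
      have hsplit : σ m n = (∏ i ∈ Finset.Icc 1 m', P i (seg T (j (i - 1)) (j i)))
          * P m (seg T (k - 1) n) := by
        rw [hv, show m = m' + 1 from by omega,
          Finset.prod_Icc_succ_top (by omega : 1 ≤ m' + 1)]
        simp only [Nat.add_sub_cancel]
        rw [hjm', show j (m' + 1) = n from by rw [show m' + 1 = m from by omega, hjm]]
      have hle : σ m n ≤ σ m' (k - 1) * P m (seg T (k - 1) n) := by
        rw [hsplit]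
        exact hmono _ _ _ ((hσ m' (k - 1) hm'1 (by omega)).2 hpre)
      have hge : σ m' (k - 1) * P m (seg T (k - 1) n) ≤ σ m n :=
        hub _ ⟨k, hk1, hk2, rfl⟩
      exact le_antisymm hle hge
    · exact hub
end

section
/- Let T = T[1..n] be a text, P = P[1..m] a segmentation pattern, and λ ≥ 1 an integer with mλ ≤ n. For 1 ≤ i ≤ m and iλ ≤ j ≤ n define s[i, j] = σ_{P[1..i],λ}(T[1..j]). Then s[1, j] = μ_{P[1]}(T[1..j]) for all λ ≤ j ≤ n, and for all i, j with 2 ≤ i ≤ m and iλ ≤ j ≤ n, s[i, j] = max{ s[i−1, k−1] ⊗ μ_{P[i]}(T[k..j]) : (i−1)λ + 1 ≤ k ≤ j − λ + 1 }. (Recurrence (4.2.1) underlying the dynamic-programming solution.) -/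
lemma jf_lb {jf : ℕ → ℕ} {lam m : ℕ} (h0 : jf 0 = 0)
    (hstep : ∀ k, k < m → jf k + lam ≤ jf (k + 1)) :
    ∀ t, t ≤ m → t * lam ≤ jf t := by
  intro t
  induction t with
  | zero => simp [h0]
  | succ t ih =>
    intro ht
    have h1 := hstep t (by omega)
    have h2 := ih (by omega)
    have : (t + 1) * lam = t * lam + lam := by ring
    omega

lemma decomp_extend {L : Type*} [CommMonoid L] {A : Type*}
    (P : ℕ → List A → L) (T : ℕ → A) (i c j lam : ℕ)
    (hc : c + lam ≤ j) {w : L} (hw : w ∈ decompVals P T i c lam) :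
    w * P (i + 1) (seg T c j) ∈ decompVals P T (i + 1) j lam := by
  obtain ⟨jf, h0, hc', hstep, hprod⟩ := hw
  refine ⟨fun t => if t = i + 1 then j else jf t, by simp [h0], by simp, ?_, ?_⟩
  · intro k hk
    rcases Nat.lt_succ_iff_lt_or_eq.mp hk with h | h
    · have h1 : k ≠ i + 1 := by omega
      have h2 : k + 1 ≠ i + 1 := by omega
      simp only [if_neg h1, if_neg h2]
      exact hstep k h
    · have h1 : k ≠ i + 1 := by omega
      simp only [if_neg h1, if_pos (show k + 1 = i + 1 by omega)]
      have : jf k = c := by rw [h, hc']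
      omega
  · rw [Finset.prod_Icc_succ_top (Nat.le_add_left 1 i)]
    have heq : ∀ t ∈ Finset.Icc 1 i,
        P t (seg T ((fun u => if u = i + 1 then j else jf u) (t - 1))
          ((fun u => if u = i + 1 then j else jf u) t))
        = P t (seg T (jf (t - 1)) (jf t)) := by
      intro t ht
      simp only [Finset.mem_Icc] at ht
      have h1 : t - 1 ≠ i + 1 := by omega
      have h2 : t ≠ i + 1 := by omega
      simp only [if_neg h1, if_neg h2]
    rw [Finset.prod_congr rfl heq, ← hprod]
    simp only [Nat.add_sub_cancel, if_neg (show i ≠ i + 1 by omega), if_pos rfl, hc', if_true]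

lemma decomp_split {L : Type*} [CommMonoid L] {A : Type*}
    (P : ℕ → List A → L) (T : ℕ → A) (i j lam : ℕ)
    {v : L} (hv : v ∈ decompVals P T (i + 1) j lam) :
    ∃ c w, i * lam ≤ c ∧ c + lam ≤ j ∧ w ∈ decompVals P T i c lam ∧
      v = w * P (i + 1) (seg T c j) := by
  obtain ⟨jf, h0, hj, hstep, hprod⟩ := hv
  refine ⟨jf i, ∏ t ∈ Finset.Icc 1 i, P t (seg T (jf (t - 1)) (jf t)),
    jf_lb h0 hstep i (by omega), ?_, ⟨jf, h0, rfl, fun k hk => hstep k (by omega), rfl⟩, ?_⟩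
  · have := hstep i (by omega); omega
  · rw [hprod, Finset.prod_Icc_succ_top (Nat.le_add_left 1 i)]
    simp [hj]

theorem global_segmentation_recurrence
    {L : Type*} [LinearOrder L] [CommMonoid L] [OrderBot L] [OrderTop L]
    (hzero : ∀ a : L, a * ⊥ = ⊥) (htop : (⊤ : L) = 1)
    (hmono : ∀ a b c : L, a ≤ b → a * c ≤ b * c)
    {A : Type*} (T : ℕ → A) (P : ℕ → List A → L)
    (n m lam : ℕ) (hm : 1 ≤ m) (hlam : 1 ≤ lam) (hmn : m * lam ≤ n)
    (s : ℕ → ℕ → L)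
    (hs : ∀ i j, 1 ≤ i → i ≤ m → i * lam ≤ j → j ≤ n →
      IsGreatest (decompVals P T i j lam) (s i j)) :
    (∀ j, lam ≤ j → j ≤ n → s 1 j = P 1 (seg T 0 j)) ∧
    (∀ i j, 2 ≤ i → i ≤ m → i * lam ≤ j → j ≤ n →
      IsGreatest
        { v | ∃ k, (i - 1) * lam + 1 ≤ k ∧ k + lam ≤ j + 1 ∧
              v = s (i - 1) (k - 1) * P i (seg T (k - 1) j) }
        (s i j)) := by
  constructor
  · intro j hj1 hj2
    have hg := hs 1 j le_rfl hm (by omega) hj2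
    obtain ⟨jf, h0, hj, hstep, hprod⟩ := hg.1
    rw [hprod]
    simp [h0, hj]
  · intro i j hi2 him hij hjn
    obtain ⟨i, rfl⟩ : ∃ i', i = i' + 1 := ⟨i - 1, by omega⟩
    have hi1 : 1 ≤ i := by omega
    have hg := hs (i + 1) j (by omega) him hij hjn
    simp only [Nat.add_sub_cancel]
    constructor
    · -- membership
      obtain ⟨c, w, hc1, hc2, hw, hv⟩ := decomp_split P T i j lam hg.1
      have hcn : c ≤ n := by omega
      have hgc := hs i c hi1 (by omega) hc1 hcn
      refine ⟨c + 1, by omega, by omega, ?_⟩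
      simp only [Nat.add_sub_cancel]
      have hle1 : s (i + 1) j ≤ s i c * P (i + 1) (seg T c j) := by
        rw [hv]; exact hmono _ _ _ (hgc.2 hw)
      have hle2 : s i c * P (i + 1) (seg T c j) ≤ s (i + 1) j :=
        hg.2 (decomp_extend P T i c j lam hc2 hgc.1)
      exact le_antisymm hle1 hle2
    · -- upper bound
      rintro v ⟨k, hk1, hk2, rfl⟩
      have hk0 : 1 ≤ k := by omega
      obtain ⟨c, rfl⟩ : ∃ c, k = c + 1 := ⟨k - 1, by omega⟩
      simp only [Nat.add_sub_cancel]
      have hgc := hs i c hi1 (by omega) (by omega) (by omega)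
      exact hg.2 (decomp_extend P T i c j lam (by omega) hgc.1)
end
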